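/- Let C be a Fell bundle over the Zappa-Szép product groupoid K = G ⋈ H, and let u : H → C be an H-unitary family (u_h ∈ C_{(r_H(h),h)}, u_h u_k = u_{hk}, u_h* = u_{h⁻¹}, u_v = 1_v for units v). Let B be the pullback Fell bundle of C along the inclusion ι : G → K, ι(x) = (x, s_G(x)), so B_x ≅ C_{(x,s_G(x))}. Then β_h(a) := u_h a u_{h|_x}* for a ∈ B_x defines a (G,H)-compatible H-action on B: β_h maps B_x into B_{h·x}, β_{gh} = β_g ∘ β_h, β_v = id for units v, β_h(bc) = β_h(b)β_{h|_{p(b)}}(c), and β_h(b)* = β_{h|_{p(b)}}(b*). -/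
import Mathlib


/-- An algebraic (discrete) groupoid with unit space `U`:
a set `G` with a (totalized) partial multiplication, inversion,
unit embedding, and source/range maps.  All axioms involving
multiplication are guarded by composability `src x = rng y`. -/
structure Gpd (G : Type*) (U : Type*) where
  mul : G → G → G
  inv : G → G
  unit : U → G
  src : G → U
  rng : G → U
  src_unit : ∀ u, src (unit u) = u
  rng_unit : ∀ u, rng (unit u) = u
  mul_assoc : ∀ x y z, src x = rng y → src y = rng z →
    mul (mul x y) z = mul x (mul y z)
  src_mul : ∀ x y, src x = rng y → src (mul x y) = src y
  rng_mul : ∀ x y, src x = rng y → rng (mul x y) = rng x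
  unit_mul : ∀ x, mul (unit (rng x)) x = x
  mul_unit : ∀ x, mul x (unit (src x)) = x
  inv_mul : ∀ x, mul (inv x) x = unit (src x)
  mul_inv : ∀ x, mul x (inv x) = unit (rng x)
  src_inv : ∀ x, src (inv x) = rng x
  rng_inv : ∀ x, rng (inv x) = src x

/-- A matched pair of groupoids `(G, H)` with common unit space `U`:
an `H`-action `act h x` (meaningful when `src h = rng x`) and a
`G`-restriction `res h x`, satisfying axioms (ZS1)–(ZS9). -/
structure MatchedPair (G : Type*) (H : Type*) (U : Type*) where
  gd : Gpd G U
  hd : Gpd H U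
  act : H → G → G
  res : H → G → H
  zs1 : ∀ h₁ h₂ x, hd.src h₁ = hd.rng h₂ → hd.src h₂ = gd.rng x →
    act (hd.mul h₁ h₂) x = act h₁ (act h₂ x)
  zs2 : ∀ h x, hd.src h = gd.rng x → gd.rng (act h x) = hd.rng h
  zs3 : ∀ x, act (hd.unit (gd.rng x)) x = x
  zs4 : ∀ h x y, hd.src h = gd.rng x → gd.src x = gd.rng y →
    res h (gd.mul x y) = res (res h x) y
  zs5 : ∀ h x, hd.src h = gd.rng x → hd.src (res h x) = gd.src x
  zs6 : ∀ h, res h (gd.unit (hd.src h)) = h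
  zs7 : ∀ h x, hd.src h = gd.rng x → gd.src (act h x) = hd.rng (res h x)
  zs8 : ∀ h x y, hd.src h = gd.rng x → gd.src x = gd.rng y →
    act h (gd.mul x y) = gd.mul (act h x) (act (res h x) y)
  zs9 : ∀ h₁ h₂ x, hd.src h₁ = hd.rng h₂ → hd.src h₂ = gd.rng x →
    res (hd.mul h₁ h₂) x = hd.mul (res h₁ (act h₂ x)) (res h₂ x)

/-- A Fell bundle `C` over the Zappa–Szép product groupoid `K = G ⋈ H` of a
matched pair, in fibred form: the fibre over `(x,h)` (meaningful when
`s_G(x) = r_H(h)`) is the Banach space `C x h`; the multiplication and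
involution follow the Zappa–Szép structure of the base.  Cross-fibre equalities
are expressed via `HEq`; axioms are guarded by membership (`s_G(x) = r_H(h)`)
and composability (`r_G(y) = s_H(h)`) conditions as appropriate.  The unit
fibres are unital C*-algebras with units `cone v`. -/
structure FellBdlZS {G H U : Type*} (M : MatchedPair G H U) (C : G → H → Type*)
    [∀ x h, NormedAddCommGroup (C x h)] [∀ x h, NormedSpace ℂ (C x h)] where
  cmul : ∀ {x : G} {h : H} {y : G} {g : H}, C x h → C y g →
    C (M.gd.mul x (M.act h y)) (M.hd.mul (M.res h y) g)
  cstar : ∀ {x : G} {h : H}, C x h →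
    C (M.act (M.hd.inv h) (M.gd.inv x)) (M.res (M.hd.inv h) (M.gd.inv x))
  cmul_add : ∀ {x h y g} (a : C x h) (b c : C y g), cmul a (b + c) = cmul a b + cmul a c
  add_cmul : ∀ {x h y g} (a b : C x h) (c : C y g), cmul (a + b) c = cmul a c + cmul b c
  smul_cmul : ∀ {x h y g} (z : ℂ) (a : C x h) (b : C y g), cmul (z • a) b = z • cmul a b
  cmul_smul : ∀ {x h y g} (z : ℂ) (a : C x h) (b : C y g), cmul a (z • b) = z • cmul a b
  cmul_assoc : ∀ {x h y g w k} (a : C x h) (b : C y g) (c : C w k),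
    M.gd.src x = M.hd.rng h → M.gd.src y = M.hd.rng g → M.gd.src w = M.hd.rng k →
    M.gd.rng y = M.hd.src h → M.gd.rng w = M.hd.src g →
    HEq (cmul (cmul a b) c) (cmul a (cmul b c))
  norm_cmul_le : ∀ {x h y g} (a : C x h) (b : C y g),
    M.gd.src x = M.hd.rng h → M.gd.src y = M.hd.rng g → M.gd.rng y = M.hd.src h →
    ‖cmul a b‖ ≤ ‖a‖ * ‖b‖
  cstar_add : ∀ {x h} (a b : C x h), cstar (a + b) = cstar a + cstar b
  cstar_smul : ∀ {x h} (z : ℂ) (a : C x h), cstar (z • a) = (starRingEnd ℂ z) • cstar a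
  cstar_cmul : ∀ {x h y g} (a : C x h) (b : C y g),
    M.gd.src x = M.hd.rng h → M.gd.src y = M.hd.rng g → M.gd.rng y = M.hd.src h →
    HEq (cstar (cmul a b)) (cmul (cstar b) (cstar a))
  cstar_cstar : ∀ {x h} (a : C x h), M.gd.src x = M.hd.rng h → HEq (cstar (cstar a)) a
  norm_cstar : ∀ {x h} (a : C x h), ‖cstar a‖ = ‖a‖
  norm_cstar_cmul : ∀ {x h} (a : C x h), M.gd.src x = M.hd.rng h →
    ‖cmul (cstar a) a‖ = ‖a‖ ^ 2
  cone : ∀ u : U, C (M.gd.unit u) (M.hd.unit u)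
  cone_cmul : ∀ {x h} (c : C x h), M.gd.src x = M.hd.rng h →
    HEq (cmul (cone (M.gd.rng x)) c) c
  cmul_cone : ∀ {x h} (c : C x h), M.gd.src x = M.hd.rng h →
    HEq (cmul c (cone (M.hd.src h))) c

section UnitaryFamily

variable {G H U : Type*} {M : MatchedPair G H U} {C : G → H → Type*}
  [∀ x h, NormedAddCommGroup (C x h)] [∀ x h, NormedSpace ℂ (C x h)]

/-- An `H`-unitary family in a Fell bundle `C` over `G ⋈ H`: a family
`u_h ∈ C_{(r_H(h), h)}` with `u_h u_k = u_{hk}`, `u_h* = u_{h⁻¹}`, and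
`u_v = 1_v` for units `v`. -/
structure UnitaryFamily (F : FellBdlZS M C) where
  uu : ∀ h : H, C (M.gd.unit (M.hd.rng h)) h
  uu_mul : ∀ h k : H, M.hd.src h = M.hd.rng k →
    HEq (F.cmul (uu h) (uu k)) (uu (M.hd.mul h k))
  uu_star : ∀ h : H, HEq (F.cstar (uu h)) (uu (M.hd.inv h))
  uu_unit : ∀ v : U, HEq (uu (M.hd.unit v)) (F.cone v)

/-- The pullback bundle `B = ι*(C)` along `ι : G → G ⋈ H`, `ι(x) = (x, s_G(x))`:
its fibre over `x` is `C_{(x, s_G(x))}`. -/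
abbrev PullbackFibre (C : G → H → Type*) (M : MatchedPair G H U) (x : G) : Type _ :=
  C x (M.hd.unit (M.gd.src x))

/-- The `H`-action on the pullback bundle defined from an `H`-unitary family:
`β_h(a) = u_h a u_{h|_x}*` (written in a totalized form accepting any fibre of
`C`, so that iterated applications typecheck). -/
def betaOf (F : FellBdlZS M C) (W : UnitaryFamily F) (h : H) {x : G} {l : H}
    (a : C x l) :=
  F.cmul (F.cmul (W.uu h) a) (F.cstar (W.uu (M.res h x)))

end UnitaryFamily

namespace Gpd

variable {G U : Type*} (gd : Gpd G U)

lemma unit_mul' (x : G) (u : U) (h : u = gd.rng x) : gd.mul (gd.unit u) x = x := by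
  subst h; exact gd.unit_mul x

lemma mul_unit' (x : G) (u : U) (h : u = gd.src x) : gd.mul x (gd.unit u) = x := by
  subst h; exact gd.mul_unit x

lemma inv_unit (u : U) : gd.inv (gd.unit u) = gd.unit u := by
  have h1 : gd.mul (gd.inv (gd.unit u)) (gd.unit u) = gd.unit u := by
    rw [gd.inv_mul, gd.src_unit]
  calc gd.inv (gd.unit u) = gd.mul (gd.inv (gd.unit u)) (gd.unit (gd.src (gd.inv (gd.unit u)))) :=
        (gd.mul_unit _).symm
    _ = gd.mul (gd.inv (gd.unit u)) (gd.unit u) := by rw [gd.src_inv, gd.rng_unit]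
    _ = gd.unit u := h1

lemma inv_left_unique {p q : G} (h1 : gd.src q = gd.rng p) (h2 : gd.rng q = gd.src p)
    (h3 : gd.mul q p = gd.unit (gd.src p)) : q = gd.inv p := by
  calc q = gd.mul q (gd.unit (gd.src q)) := (gd.mul_unit q).symm
    _ = gd.mul q (gd.mul p (gd.inv p)) := by rw [h1, ← gd.mul_inv]
    _ = gd.mul (gd.mul q p) (gd.inv p) := (gd.mul_assoc q p (gd.inv p) h1 (gd.rng_inv p).symm).symm
    _ = gd.mul (gd.unit (gd.rng (gd.inv p))) (gd.inv p) := by rw [h3, gd.rng_inv]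
    _ = gd.inv p := gd.unit_mul _

lemma inv_right_unique {p q : G} (h1 : gd.src p = gd.rng q) (h2 : gd.src q = gd.rng p)
    (h3 : gd.mul p q = gd.unit (gd.rng p)) : q = gd.inv p := by
  calc q = gd.mul (gd.unit (gd.rng q)) q := (gd.unit_mul q).symm
    _ = gd.mul (gd.mul (gd.inv p) p) q := by rw [← h1, ← gd.inv_mul]
    _ = gd.mul (gd.inv p) (gd.mul p q) := gd.mul_assoc _ p q (by rw [gd.src_inv]) h1
    _ = gd.mul (gd.inv p) (gd.unit (gd.src (gd.inv p))) := by rw [h3, gd.src_inv]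
    _ = gd.inv p := gd.mul_unit _

lemma inv_inv (x : G) : gd.inv (gd.inv x) = x := by
  refine (gd.inv_right_unique (p := gd.inv x) (q := x) (gd.src_inv x) ?_ ?_).symm
  · exact (gd.rng_inv x).symm
  · rw [gd.inv_mul, gd.rng_inv]

lemma inv_mul_rev {x y : G} (h : gd.src x = gd.rng y) :
    gd.inv (gd.mul x y) = gd.mul (gd.inv y) (gd.inv x) := by
  refine (gd.inv_left_unique ?_ ?_ ?_).symm
  · rw [gd.src_mul _ _ (by rw [gd.src_inv, gd.rng_inv, h]), gd.src_inv,
      gd.rng_mul x y h]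
  · rw [gd.rng_mul _ _ (by rw [gd.src_inv, gd.rng_inv, h]), gd.rng_inv,
      gd.src_mul x y h]
  · calc gd.mul (gd.mul (gd.inv y) (gd.inv x)) (gd.mul x y)
        = gd.mul (gd.inv y) (gd.mul (gd.inv x) (gd.mul x y)) := by
          refine gd.mul_assoc _ _ _ (by rw [gd.src_inv, gd.rng_inv, h]) ?_
          rw [gd.src_inv, gd.rng_mul x y h]
      _ = gd.mul (gd.inv y) (gd.mul (gd.mul (gd.inv x) x) y) := by
          rw [gd.mul_assoc _ x y (by rw [gd.src_inv]) h]
      _ = gd.mul (gd.inv y) y := by rw [gd.inv_mul, gd.unit_mul' y _ h]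
      _ = gd.unit (gd.src y) := gd.inv_mul y
      _ = gd.unit (gd.src (gd.mul x y)) := by rw [gd.src_mul x y h]

lemma idem {a : G} (h1 : gd.mul a a = a) (h2 : gd.src a = gd.rng a) :
    a = gd.unit (gd.src a) := by
  calc a = gd.mul (gd.unit (gd.rng a)) a := (gd.unit_mul a).symm
    _ = gd.mul (gd.mul (gd.inv a) a) a := by rw [gd.inv_mul, h2]
    _ = gd.mul (gd.inv a) (gd.mul a a) := gd.mul_assoc _ a a (by rw [gd.src_inv]) h2
    _ = gd.mul (gd.inv a) a := by rw [h1]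
    _ = gd.unit (gd.src a) := gd.inv_mul a

lemma unit_mul_unit (u : U) : gd.mul (gd.unit u) (gd.unit u) = gd.unit u :=
  gd.unit_mul' _ _ (by rw [gd.rng_unit])

end Gpd
namespace MatchedPair

variable {G H U : Type*} (M : MatchedPair G H U)

lemma act_unit_src (k : H) :
    M.act k (M.gd.unit (M.hd.src k)) = M.gd.unit (M.hd.rng k) := by
  set A := M.act k (M.gd.unit (M.hd.src k)) with hA
  have g1 : M.hd.src k = M.gd.rng (M.gd.unit (M.hd.src k)) := by rw [M.gd.rng_unit]
  have g2 : M.gd.src (M.gd.unit (M.hd.src k)) = M.gd.rng (M.gd.unit (M.hd.src k)) := by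
    rw [M.gd.src_unit, M.gd.rng_unit]
  have h8 := M.zs8 k (M.gd.unit (M.hd.src k)) (M.gd.unit (M.hd.src k)) g1 g2
  rw [M.gd.unit_mul_unit, M.zs6] at h8
  have hidem : M.gd.mul A A = A := by rw [← hA] at h8; exact h8.symm
  have hrng : M.gd.rng A = M.hd.rng k := M.zs2 k _ g1
  have hsrc : M.gd.src A = M.hd.rng (M.res k (M.gd.unit (M.hd.src k))) := M.zs7 k _ g1
  rw [M.zs6] at hsrc
  have := M.gd.idem hidem (by rw [hsrc, hrng])
  rw [this, hsrc]

lemma res_unit_rng (x : G) :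
    M.res (M.hd.unit (M.gd.rng x)) x = M.hd.unit (M.gd.src x) := by
  set v := M.hd.unit (M.gd.rng x) with hv
  set B := M.res v x with hB
  have gv : M.hd.src v = M.gd.rng x := by rw [hv, M.hd.src_unit]
  have gvv : M.hd.src v = M.hd.rng v := by rw [hv, M.hd.src_unit, M.hd.rng_unit]
  have h9 := M.zs9 v v x gvv gv
  rw [M.zs3 x, M.hd.unit_mul' v (M.gd.rng x) (by rw [hv, M.hd.rng_unit])] at h9
  have hidem : M.hd.mul B B = B := h9.symm
  have hsrc : M.hd.src B = M.gd.src x := M.zs5 v x gv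
  have hrng : M.hd.rng B = M.gd.src x := by
    have h7 := M.zs7 v x gv
    rw [M.zs3 x] at h7; exact h7.symm
  have := M.hd.idem hidem (by rw [hsrc, hrng])
  rw [this, hsrc]

lemma res_res_inv {h : H} {y : G} (hc : M.hd.src h = M.gd.rng y) :
    M.res (M.res h y) (M.gd.inv y) = h := by
  have h4 := M.zs4 h y (M.gd.inv y) hc (M.gd.rng_inv y).symm
  rw [M.gd.mul_inv] at h4
  rw [← h4, ← hc, M.zs6]

lemma act_res_inv {h : H} {y : G} (hc : M.hd.src h = M.gd.rng y) :
    M.act (M.res h y) (M.gd.inv y) = M.gd.inv (M.act h y) := by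
  have h8 := M.zs8 h y (M.gd.inv y) hc (M.gd.rng_inv y).symm
  rw [M.gd.mul_inv] at h8
  have hl : M.act h (M.gd.unit (M.gd.rng y)) = M.gd.unit (M.hd.rng h) := by
    rw [← hc, M.act_unit_src]
  rw [hl] at h8
  refine M.gd.inv_right_unique ?_ ?_ ?_
  · -- src (act h y) = rng (act (res h y) (inv y))
    rw [M.zs7 h y hc, M.zs2 (M.res h y) (M.gd.inv y) (by rw [M.zs5 h y hc, M.gd.rng_inv])]
  · -- src (act (res h y) (inv y)) = rng (act h y)
    rw [M.zs7 (M.res h y) (M.gd.inv y) (by rw [M.zs5 h y hc, M.gd.rng_inv]),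
      M.res_res_inv hc, M.zs2 h y hc]
  · rw [← h8, M.zs2 h y hc]

lemma act_inv_res {h : H} {y : G} (hc : M.hd.src h = M.gd.rng y) :
    M.act (M.hd.inv (M.res h y)) (M.gd.inv (M.act h y)) = M.gd.inv y := by
  rw [← M.act_res_inv hc,
    ← M.zs1 (M.hd.inv (M.res h y)) (M.res h y) (M.gd.inv y)
      (by rw [M.hd.src_inv]) (by rw [M.zs5 h y hc, M.gd.rng_inv]),
    M.hd.inv_mul, M.zs5 h y hc]
  have : M.gd.src y = M.gd.rng (M.gd.inv y) := (M.gd.rng_inv y).symm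
  rw [this, M.zs3]

lemma res_inv_res {h : H} {y : G} (hc : M.hd.src h = M.gd.rng y) :
    M.res (M.hd.inv (M.res h y)) (M.gd.inv (M.act h y)) = M.hd.inv h := by
  set k := M.res h y with hk
  have hsk : M.hd.src k = M.gd.src y := M.zs5 h y hc
  have h9 := M.zs9 (M.hd.inv k) k (M.gd.inv y) (by rw [M.hd.src_inv])
    (by rw [hsk, M.gd.rng_inv])
  rw [M.hd.inv_mul, M.act_res_inv hc, M.res_res_inv hc] at h9
  have hlhs : M.res (M.hd.unit (M.hd.src k)) (M.gd.inv y) = M.hd.unit (M.hd.src h) := by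
    have h1 : M.hd.src k = M.gd.rng (M.gd.inv y) := by rw [hsk, M.gd.rng_inv]
    rw [h1, M.res_unit_rng, M.gd.src_inv, ← hc]
  rw [hlhs] at h9
  refine M.hd.inv_left_unique ?_ ?_ h9.symm
  · -- src (res (inv k) (inv (act h y))) = rng h
    rw [M.zs5 (M.hd.inv k) (M.gd.inv (M.act h y))
      (by rw [M.hd.src_inv, M.gd.rng_inv, M.zs7 h y hc]),
      M.gd.src_inv, M.zs2 h y hc]
  · -- rng (res (inv k) (inv (act h y))) = src h
    have h7 := M.zs7 (M.hd.inv k) (M.gd.inv (M.act h y))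
      (by rw [M.hd.src_inv, M.gd.rng_inv, M.zs7 h y hc])
    rw [M.act_inv_res hc, M.gd.src_inv] at h7
    rw [← h7, hc]


end MatchedPair
section Elt

variable {G H U : Type*} {M : MatchedPair G H U} {C : G → H → Type*}
  [∀ x h, NormedAddCommGroup (C x h)] [∀ x h, NormedSpace ℂ (C x h)]

/-- Total space of the bundle as a sigma type. -/
def emb {x : G} {h : H} (a : C x h) : Σ x : G, Σ h : H, C x h := ⟨x, h, a⟩

lemma em_congr {x x' : G} {h h' : H} {a : C x h} {b : C x' h'}
    (hx : x = x') (hh : h = h') (hab : HEq a b) : emb a = emb b := by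
  subst hx; subst hh; rw [eq_of_heq hab]

lemma heq_of_em {x x' : G} {h h' : H} {a : C x h} {b : C x' h'}
    (e : emb a = emb b) : HEq a b := by
  unfold emb at e
  obtain ⟨rfl, e2⟩ := Sigma.mk.inj_iff.mp e
  obtain ⟨rfl, e3⟩ := Sigma.mk.inj_iff.mp (eq_of_heq e2)
  exact e3

/-- Totalized multiplication on the total space. -/
def Em (F : FellBdlZS M C) (e f : Σ x : G, Σ h : H, C x h) : Σ x : G, Σ h : H, C x h :=
  ⟨_, _, F.cmul e.2.2 f.2.2⟩

/-- Totalized involution on the total space. -/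
def Es (F : FellBdlZS M C) (e : Σ x : G, Σ h : H, C x h) : Σ x : G, Σ h : H, C x h :=
  ⟨_, _, F.cstar e.2.2⟩

/-- The unitary family as elements of the total space. -/
def Eu (F : FellBdlZS M C) (W : UnitaryFamily F) (h : H) : Σ x : G, Σ h : H, C x h :=
  emb (W.uu h)

/-- Fibre-membership predicate: the element sits over an actual arrow of `G ⋈ H`. -/
def Mem (M : MatchedPair G H U) (e : Σ x : G, Σ h : H, C x h) : Prop :=
  M.gd.src e.1 = M.hd.rng e.2.1

/-- Composability of two elements of the total space. -/
def Cmp (M : MatchedPair G H U) (e f : Σ x : G, Σ h : H, C x h) : Prop :=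
  M.gd.rng f.1 = M.hd.src e.2.1

variable (F : FellBdlZS M C) (W : UnitaryFamily F)

lemma mem_Eu (h : H) : Mem M (Eu F W h) := M.gd.src_unit _

lemma cmp_to_Eu {x : G} {h' : H} {a : C x h'} {h : H}
    (hc : M.hd.rng h = M.hd.src h') : Cmp M (emb a) (Eu F W h) := by
  show M.gd.rng (M.gd.unit (M.hd.rng h)) = M.hd.src h'
  rw [M.gd.rng_unit]; exact hc

lemma cmp_of_Eu {e : Σ x : G, Σ h : H, C x h} {h : H}
    (hc : M.gd.rng e.1 = M.hd.src h) : Cmp M (Eu F W h) e := hc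

lemma mem_Em {e f : Σ x : G, Σ h : H, C x h}
    (he : Mem M e) (hf : Mem M f) (hc : Cmp M e f) : Mem M (Em F e f) := by
  obtain ⟨x, h, a⟩ := e; obtain ⟨y, g, b⟩ := f
  show M.gd.src (M.gd.mul x (M.act h y)) = M.hd.rng (M.hd.mul (M.res h y) g)
  rw [M.gd.src_mul x _ (by rw [M.zs2 h y hc.symm]; exact he),
    M.hd.rng_mul _ g (by rw [M.zs5 h y hc.symm]; exact hf),
    M.zs7 h y hc.symm]

lemma mem_Es {e : Σ x : G, Σ h : H, C x h} (he : Mem M e) : Mem M (Es F e) := by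
  obtain ⟨x, h, a⟩ := e
  exact M.zs7 (M.hd.inv h) (M.gd.inv x) (by rw [M.hd.src_inv, M.gd.rng_inv]; exact he.symm)

lemma cmp_Em_left {e f g : Σ x : G, Σ h : H, C x h}
    (hef : Cmp M e f) (hf : Mem M f) (hfg : Cmp M f g) : Cmp M (Em F e f) g := by
  obtain ⟨x, h, a⟩ := e; obtain ⟨y, g', b⟩ := f
  show M.gd.rng g.1 = M.hd.src (M.hd.mul (M.res h y) g')
  rw [M.hd.src_mul _ g' (by rw [M.zs5 h y hef.symm]; exact hf)]
  exact hfg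

lemma cmp_Em_right {e f g : Σ x : G, Σ h : H, C x h}
    (hef : Cmp M e f) (hf : Mem M f) (hfg : Cmp M f g) : Cmp M e (Em F f g) := by
  obtain ⟨y, g', b⟩ := f; obtain ⟨w, k, c⟩ := g
  show M.gd.rng (M.gd.mul y (M.act g' w)) = M.hd.src e.2.1
  rw [M.gd.rng_mul y _ (by rw [M.zs2 g' w hfg.symm]; exact hf)]
  exact hef

end Elt
section Elt2

variable {G H U : Type*} {M : MatchedPair G H U} {C : G → H → Type*}
  [∀ x h, NormedAddCommGroup (C x h)] [∀ x h, NormedSpace ℂ (C x h)]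
  (F : FellBdlZS M C) (W : UnitaryFamily F)

lemma Em_assoc {e f g : Σ x : G, Σ h : H, C x h}
    (he : Mem M e) (hf : Mem M f) (hg : Mem M g)
    (hef : Cmp M e f) (hfg : Cmp M f g) :
    Em F (Em F e f) g = Em F e (Em F f g) := by
  obtain ⟨x, h, a⟩ := e; obtain ⟨y, g', b⟩ := f; obtain ⟨w, k, c⟩ := g
  have he : M.gd.src x = M.hd.rng h := he
  have hf : M.gd.src y = M.hd.rng g' := hf
  have hg : M.gd.src w = M.hd.rng k := hg
  have hef : M.hd.src h = M.gd.rng y := hef.symm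
  have hfg : M.hd.src g' = M.gd.rng w := hfg.symm
  have g3 : M.hd.src (M.res h y) = M.hd.rng g' := by rw [M.zs5 h y hef]; exact hf
  have g4 : M.hd.src (M.hd.mul (M.res h y) g') = M.gd.rng w := by
    rw [M.hd.src_mul _ g' g3]; exact hfg
  refine em_congr ?_ ?_ (F.cmul_assoc a b c he hf hg hef.symm hfg.symm)
  · show M.gd.mul (M.gd.mul x (M.act h y)) (M.act (M.hd.mul (M.res h y) g') w)
      = M.gd.mul x (M.act h (M.gd.mul y (M.act g' w)))
    have t1 : M.act h (M.gd.mul y (M.act g' w))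
        = M.gd.mul (M.act h y) (M.act (M.res h y) (M.act g' w)) :=
      M.zs8 h y (M.act g' w) hef (by rw [M.zs2 g' w hfg]; exact hf)
    have t2 : M.act (M.res h y) (M.act g' w) = M.act (M.hd.mul (M.res h y) g') w :=
      (M.zs1 _ g' w g3 hfg).symm
    rw [t1, t2]
    refine M.gd.mul_assoc x (M.act h y) _ ?_ ?_
    · rw [M.zs2 h y hef]; exact he
    · rw [M.zs7 h y hef, M.zs2 _ w g4, M.hd.rng_mul _ g' g3]
  · show M.hd.mul (M.res (M.hd.mul (M.res h y) g') w) k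
      = M.hd.mul (M.res h (M.gd.mul y (M.act g' w))) (M.hd.mul (M.res g' w) k)
    have t3 : M.res h (M.gd.mul y (M.act g' w)) = M.res (M.res h y) (M.act g' w) :=
      M.zs4 h y (M.act g' w) hef (by rw [M.zs2 g' w hfg]; exact hf)
    have t4 : M.res (M.hd.mul (M.res h y) g') w
        = M.hd.mul (M.res (M.res h y) (M.act g' w)) (M.res g' w) :=
      M.zs9 (M.res h y) g' w g3 hfg
    rw [t3, t4]
    refine M.hd.mul_assoc _ _ k ?_ ?_
    · rw [M.zs5 _ (M.act g' w) (by rw [M.zs2 g' w hfg]; exact g3), M.zs7 g' w hfg]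
    · rw [M.zs5 g' w hfg]; exact hg

lemma Es_Em {e f : Σ x : G, Σ h : H, C x h}
    (he : Mem M e) (hf : Mem M f) (hef : Cmp M e f) :
    Es F (Em F e f) = Em F (Es F f) (Es F e) := by
  obtain ⟨x, h, a⟩ := e; obtain ⟨y, g, b⟩ := f
  have he : M.gd.src x = M.hd.rng h := he
  have hf : M.gd.src y = M.hd.rng g := hf
  have hef : M.hd.src h = M.gd.rng y := hef.symm
  set k := M.res h y with hk
  have gk : M.hd.src k = M.gd.src y := M.zs5 h y hef
  have e1 : M.hd.inv (M.hd.mul k g) = M.hd.mul (M.hd.inv g) (M.hd.inv k) :=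
    M.hd.inv_mul_rev (by rw [gk]; exact hf)
  have e2 : M.gd.inv (M.gd.mul x (M.act h y)) = M.gd.mul (M.gd.inv (M.act h y)) (M.gd.inv x) :=
    M.gd.inv_mul_rev (by rw [M.zs2 h y hef]; exact he)
  have A1 : M.act (M.hd.inv k) (M.gd.inv (M.act h y)) = M.gd.inv y := M.act_inv_res hef
  have A2 : M.res (M.hd.inv k) (M.gd.inv (M.act h y)) = M.hd.inv h := M.res_inv_res hef
  have ginvg : M.hd.src (M.hd.inv g) = M.hd.rng (M.hd.inv k) := by
    rw [M.hd.src_inv, M.hd.rng_inv, gk]; exact hf.symm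
  have gZ : M.gd.src (M.gd.inv (M.act h y)) = M.gd.rng (M.gd.inv x) := by
    rw [M.gd.src_inv, M.gd.rng_inv, M.zs2 h y hef]; exact he.symm
  have gkZ : M.hd.src (M.hd.inv k) = M.gd.rng (M.gd.mul (M.gd.inv (M.act h y)) (M.gd.inv x)) := by
    rw [M.hd.src_inv, M.gd.rng_mul _ _ gZ, M.gd.rng_inv, M.zs7 h y hef]
  have gkZ' : M.hd.src (M.hd.inv k) = M.gd.rng (M.gd.inv (M.act h y)) := by
    rw [M.hd.src_inv, M.gd.rng_inv, M.zs7 h y hef]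
  have step2 : M.act (M.hd.inv k) (M.gd.mul (M.gd.inv (M.act h y)) (M.gd.inv x))
      = M.gd.mul (M.gd.inv y) (M.act (M.hd.inv h) (M.gd.inv x)) := by
    rw [M.zs8 _ _ _ gkZ' gZ, A1, A2]
  have ginvy : M.hd.src (M.hd.inv g) = M.gd.rng (M.gd.inv y) := by
    rw [M.hd.src_inv, M.gd.rng_inv]; exact hf.symm
  have gyx : M.gd.src (M.gd.inv y) = M.gd.rng (M.act (M.hd.inv h) (M.gd.inv x)) := by
    rw [M.gd.src_inv, M.zs2 (M.hd.inv h) (M.gd.inv x)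
      (by rw [M.hd.src_inv, M.gd.rng_inv]; exact he.symm), M.hd.rng_inv]
    exact hef.symm
  refine em_congr ?_ ?_ (F.cstar_cmul a b he hf hef.symm)
  · show M.act (M.hd.inv (M.hd.mul k g)) (M.gd.inv (M.gd.mul x (M.act h y)))
      = M.gd.mul (M.act (M.hd.inv g) (M.gd.inv y))
          (M.act (M.res (M.hd.inv g) (M.gd.inv y)) (M.act (M.hd.inv h) (M.gd.inv x)))
    rw [e1, e2, M.zs1 _ _ _ ginvg gkZ, step2, M.zs8 _ _ _ ginvy gyx]
  · show M.res (M.hd.inv (M.hd.mul k g)) (M.gd.inv (M.gd.mul x (M.act h y)))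
      = M.hd.mul (M.res (M.res (M.hd.inv g) (M.gd.inv y)) (M.act (M.hd.inv h) (M.gd.inv x)))
          (M.res (M.hd.inv h) (M.gd.inv x))
    rw [e1, e2, M.zs9 _ _ _ ginvg gkZ, step2,
      M.zs4 _ _ _ gkZ' gZ, A2, M.zs4 _ _ _ ginvy gyx]

lemma Eu_mul {h k : H} (hhk : M.hd.src h = M.hd.rng k) :
    Em F (Eu F W h) (Eu F W k) = Eu F W (M.hd.mul h k) := by
  refine em_congr ?_ ?_ (W.uu_mul h k hhk)
  · show M.gd.mul (M.gd.unit (M.hd.rng h)) (M.act h (M.gd.unit (M.hd.rng k)))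
      = M.gd.unit (M.hd.rng (M.hd.mul h k))
    rw [← hhk, M.act_unit_src, M.gd.unit_mul_unit, M.hd.rng_mul h k hhk]
  · show M.hd.mul (M.res h (M.gd.unit (M.hd.rng k))) k = M.hd.mul h k
    rw [← hhk, M.zs6]

lemma Es_Eu (h : H) : Es F (Eu F W h) = Eu F W (M.hd.inv h) := by
  refine em_congr ?_ ?_ (W.uu_star h)
  · show M.act (M.hd.inv h) (M.gd.inv (M.gd.unit (M.hd.rng h)))
      = M.gd.unit (M.hd.rng (M.hd.inv h))
    rw [M.gd.inv_unit, ← M.hd.src_inv h, M.act_unit_src]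
  · show M.res (M.hd.inv h) (M.gd.inv (M.gd.unit (M.hd.rng h))) = M.hd.inv h
    rw [M.gd.inv_unit, ← M.hd.src_inv h, M.zs6]

lemma Eu_cone (v : U) : Eu F W (M.hd.unit v) = emb (F.cone v) := by
  refine em_congr ?_ rfl (W.uu_unit v)
  show M.gd.unit (M.hd.rng (M.hd.unit v)) = M.gd.unit v
  rw [M.hd.rng_unit]

lemma Em_cone_left {x : G} {h : H} (c : C x h) (hm : M.gd.src x = M.hd.rng h) :
    Em F (emb (F.cone (M.gd.rng x))) (emb c) = emb c := by
  refine em_congr ?_ ?_ (F.cone_cmul c hm)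
  · show M.gd.mul (M.gd.unit (M.gd.rng x)) (M.act (M.hd.unit (M.gd.rng x)) x) = x
    rw [M.zs3 x, M.gd.unit_mul]
  · show M.hd.mul (M.res (M.hd.unit (M.gd.rng x)) x) h = h
    rw [M.res_unit_rng x, M.hd.unit_mul' h _ hm]

lemma Em_cone_right {x : G} {h : H} (c : C x h) (hm : M.gd.src x = M.hd.rng h) :
    Em F (emb c) (emb (F.cone (M.hd.src h))) = emb c := by
  refine em_congr ?_ ?_ (F.cmul_cone c hm)
  · show M.gd.mul x (M.act h (M.gd.unit (M.hd.src h))) = x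
    rw [M.act_unit_src h, M.gd.mul_unit' x _ hm.symm]
  · show M.hd.mul (M.res h (M.gd.unit (M.hd.src h))) (M.hd.unit (M.hd.src h)) = h
    rw [M.zs6, M.hd.mul_unit]

end Elt2
section Beta

variable {G H U : Type*} {M : MatchedPair G H U} {C : G → H → Type*}
  [∀ x h, NormedAddCommGroup (C x h)] [∀ x h, NormedSpace ℂ (C x h)]
  (F : FellBdlZS M C) (W : UnitaryFamily F)

lemma mem_emb_pb {x : G} (a : C x (M.hd.unit (M.gd.src x))) : Mem M (emb a) := by
  show M.gd.src x = M.hd.rng (M.hd.unit (M.gd.src x))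
  rw [M.hd.rng_unit]

/-- `Elt`-level left unit law. -/
lemma Em_cone_left' (e : Σ x : G, Σ h : H, C x h) (hm : Mem M e)
    (u : U) (hu : u = M.gd.rng e.1) :
    Em F (emb (F.cone u)) e = e := by
  obtain ⟨x, h, c⟩ := e; subst hu
  exact Em_cone_left F c hm

/-- `Elt`-level right unit law. -/
lemma Em_cone_right' (e : Σ x : G, Σ h : H, C x h) (hm : Mem M e)
    (u : U) (hu : u = M.hd.src e.2.1) :
    Em F e (emb (F.cone u)) = e := by
  obtain ⟨x, h, c⟩ := e; subst hu
  exact Em_cone_right F c hm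

lemma beta_norm (h : H) {x : G} (a : C x (M.hd.unit (M.gd.src x))) :
    emb (betaOf F W h a)
      = Em F (Em F (Eu F W h) (emb a)) (Eu F W (M.hd.inv (M.res h x))) := by
  show Em F (Em F (Eu F W h) (emb a)) (Es F (Eu F W (M.res h x))) = _
  rw [Es_Eu]

lemma beta_fst (h : H) {x : G} (hc : M.hd.src h = M.gd.rng x)
    (a : C x (M.hd.unit (M.gd.src x))) :
    (emb (betaOf F W h a)).1 = M.act h x := by
  show M.gd.mul (M.gd.mul (M.gd.unit (M.hd.rng h)) (M.act h x))
      (M.act (M.hd.mul (M.res h x) (M.hd.unit (M.gd.src x)))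
        (M.act (M.hd.inv (M.res h x)) (M.gd.inv (M.gd.unit (M.hd.rng (M.res h x))))))
    = M.act h x
  have l1 : M.hd.mul (M.res h x) (M.hd.unit (M.gd.src x)) = M.res h x :=
    M.hd.mul_unit' _ _ (M.zs5 h x hc).symm
  have l2 : M.act (M.hd.inv (M.res h x)) (M.gd.inv (M.gd.unit (M.hd.rng (M.res h x))))
      = M.gd.unit (M.hd.src (M.res h x)) := by
    rw [M.gd.inv_unit, ← M.hd.src_inv (M.res h x), M.act_unit_src, M.hd.rng_inv]
  rw [l1, l2, M.act_unit_src, M.gd.unit_mul' _ _ (M.zs2 h x hc).symm,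
    M.gd.mul_unit' _ _ (M.zs7 h x hc).symm]

lemma beta_snd (h : H) {x : G} (hc : M.hd.src h = M.gd.rng x)
    (a : C x (M.hd.unit (M.gd.src x))) :
    (emb (betaOf F W h a)).2.1 = M.hd.unit (M.gd.src (M.act h x)) := by
  show M.hd.mul
      (M.res (M.hd.mul (M.res h x) (M.hd.unit (M.gd.src x)))
        (M.act (M.hd.inv (M.res h x)) (M.gd.inv (M.gd.unit (M.hd.rng (M.res h x))))))
      (M.res (M.hd.inv (M.res h x)) (M.gd.inv (M.gd.unit (M.hd.rng (M.res h x)))))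
    = M.hd.unit (M.gd.src (M.act h x))
  have l1 : M.hd.mul (M.res h x) (M.hd.unit (M.gd.src x)) = M.res h x :=
    M.hd.mul_unit' _ _ (M.zs5 h x hc).symm
  have l2 : M.act (M.hd.inv (M.res h x)) (M.gd.inv (M.gd.unit (M.hd.rng (M.res h x))))
      = M.gd.unit (M.hd.src (M.res h x)) := by
    rw [M.gd.inv_unit, ← M.hd.src_inv (M.res h x), M.act_unit_src, M.hd.rng_inv]
  have l3 : M.res (M.hd.inv (M.res h x)) (M.gd.inv (M.gd.unit (M.hd.rng (M.res h x))))
      = M.hd.inv (M.res h x) := by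
    rw [M.gd.inv_unit, ← M.hd.src_inv (M.res h x), M.zs6]
  rw [l1, l2, l3, M.zs6, M.hd.mul_inv, M.zs7 h x hc]

end Beta
/-- Let `C` be a Fell bundle over `K = G ⋈ H` with an `H`-unitary family `u`,
and let `B` be the pullback of `C` along `ι : G → K`, `ι(x) = (x, s_G(x))`
(so `B_x = C_{(x, s_G(x))}`).  Then `β_h(a) := u_h a u_{h|_x}*` defines a
`(G,H)`-compatible `H`-action on `B`: (A1) `β_h` maps `B_x` into `B_{h·x}` and
is linear, (A2) `β_{gh} = β_g ∘ β_h`, (A3) `β_v = id` for units `v`,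
(A4) `β_h(bc) = β_h(b) β_{h|_{p(b)}}(c)`, and (A5) `β_h(b)* = β_{h|_{p(b)}}(b*)`.
(Since the defining formula a priori lands in a fibre of `C` whose base point
is only propositionally the correct one, fibre membership and compositions are
expressed via `HEq` and correctly-typed witnesses.) -/
theorem unitary_family_gives_compatible_action {G H U : Type*}
    (M : MatchedPair G H U) (C : G → H → Type*)
    [∀ x h, NormedAddCommGroup (C x h)] [∀ x h, NormedSpace ℂ (C x h)]
    (F : FellBdlZS M C) (W : UnitaryFamily F) :
    -- (A1) membership: `β_h(a) ∈ B_{h·x}`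
    (∀ (h : H) (x : G) (a : PullbackFibre C M x), M.hd.src h = M.gd.rng x →
      ∃ b : PullbackFibre C M (M.act h x), HEq (betaOf F W h a) b) ∧
    -- (A1) linearity:
    (∀ (h : H) (x : G) (a b : PullbackFibre C M x),
      betaOf F W h (a + b) = betaOf F W h a + betaOf F W h b) ∧
    (∀ (h : H) (x : G) (z : ℂ) (a : PullbackFibre C M x),
      betaOf F W h (z • a) = z • betaOf F W h a) ∧
    -- (A2) `β_{gh} = β_g ∘ β_h`:
    (∀ (g h : H) (x : G) (a : PullbackFibre C M x)
      (b : PullbackFibre C M (M.act h x)),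
      M.hd.src g = M.hd.rng h → M.hd.src h = M.gd.rng x →
      HEq (betaOf F W h a) b →
      HEq (betaOf F W (M.hd.mul g h) a) (betaOf F W g b)) ∧
    -- (A3) `β_v = id` for units `v`:
    (∀ (x : G) (a : PullbackFibre C M x),
      HEq (betaOf F W (M.hd.unit (M.gd.rng x)) a) a) ∧
    -- (A4) `β_h(bc) = β_h(b) β_{h|_{p(b)}}(c)`:
    (∀ (h : H) (x y : G) (a : PullbackFibre C M x) (b : PullbackFibre C M y)
      (ab : PullbackFibre C M (M.gd.mul x y)),
      M.hd.src h = M.gd.rng x → M.gd.src x = M.gd.rng y →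
      HEq (F.cmul a b) ab →
      HEq (betaOf F W h ab) (F.cmul (betaOf F W h a) (betaOf F W (M.res h x) b))) ∧
    -- (A5) `β_h(b)* = β_{h|_{p(b)}}(b*)`:
    (∀ (h : H) (x : G) (a : PullbackFibre C M x)
      (astar : PullbackFibre C M (M.gd.inv x)),
      M.hd.src h = M.gd.rng x →
      HEq (F.cstar a) astar →
      HEq (F.cstar (betaOf F W h a)) (betaOf F W (M.res h x) astar)) := by
  refine ⟨?_, ?_, ?_, ?_, ?_, ?_, ?_⟩
  · -- (A1) membership
    intro h x a hc
    exact ⟨cast (congrArg₂ C (beta_fst F W h hc a) (beta_snd F W h hc a)) (betaOf F W h a),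
      (cast_heq _ _).symm⟩
  · -- (A1) additivity
    intro h x a b
    simp only [betaOf, F.cmul_add, F.add_cmul]
  · -- (A1) homogeneity
    intro h x z a
    simp only [betaOf, F.cmul_smul, F.smul_cmul]
  · -- (A2)
    intro g h x a b hg hh hb
    refine heq_of_em ?_
    have hmk : M.hd.src (M.res g (M.act h x)) = M.hd.rng (M.res h x) := by
      rw [M.zs5 g (M.act h x) (by rw [M.zs2 h x hh]; exact hg), M.zs7 h x hh]
    have hbe : emb (betaOf F W h a) = emb (C := C) b :=
      em_congr (beta_fst F W h hh a) (beta_snd F W h hh a) hb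
    have mA : Mem M (emb a) := mem_emb_pb a
    have cha : Cmp M (Eu F W h) (emb a) := hh.symm
    have cgh : Cmp M (Eu F W g) (Eu F W h) := by
      show M.gd.rng (M.gd.unit (M.hd.rng h)) = M.hd.src g
      rw [M.gd.rng_unit]; exact hg.symm
    have cAk : Cmp M (emb a) (Eu F W (M.hd.inv (M.res h x))) :=
      cmp_to_Eu F W (by rw [M.hd.rng_inv, M.zs5 h x hh, M.hd.src_unit])
    have ckm : Cmp M (Eu F W (M.hd.inv (M.res h x))) (Eu F W (M.hd.inv (M.res g (M.act h x)))) := by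
      show M.gd.rng (M.gd.unit (M.hd.rng (M.hd.inv (M.res g (M.act h x)))))
        = M.hd.src (M.hd.inv (M.res h x))
      rw [M.gd.rng_unit, M.hd.rng_inv, M.hd.src_inv]; exact hmk
    have mPA : Mem M (Em F (Eu F W h) (emb a)) := mem_Em F (mem_Eu F W h) mA cha
    have cPAk : Cmp M (Em F (Eu F W h) (emb a)) (Eu F W (M.hd.inv (M.res h x))) :=
      cmp_Em_left F cha mA cAk
    have cgPA : Cmp M (Eu F W g) (Em F (Eu F W h) (emb a)) :=
      cmp_Em_right F cgh (mem_Eu F W h) cha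
    calc emb (betaOf F W (M.hd.mul g h) a)
        = Em F (Em F (Eu F W (M.hd.mul g h)) (emb a))
            (Eu F W (M.hd.inv (M.res (M.hd.mul g h) x))) := beta_norm F W _ a
      _ = Em F (Em F (Em F (Eu F W g) (Eu F W h)) (emb a))
            (Em F (Eu F W (M.hd.inv (M.res h x))) (Eu F W (M.hd.inv (M.res g (M.act h x))))) := by
          rw [M.zs9 g h x hg hh, M.hd.inv_mul_rev hmk,
            ← Eu_mul F W (h := M.hd.inv (M.res h x)) (k := M.hd.inv (M.res g (M.act h x)))
              (by rw [M.hd.src_inv, M.hd.rng_inv]; exact hmk.symm),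
            ← Eu_mul F W hg]
      _ = Em F (Em F (Eu F W g) (Em F (Eu F W h) (emb a)))
            (Em F (Eu F W (M.hd.inv (M.res h x))) (Eu F W (M.hd.inv (M.res g (M.act h x))))) := by
          rw [Em_assoc F (mem_Eu F W g) (mem_Eu F W h) mA cgh cha]
      _ = Em F (Em F (Em F (Eu F W g) (Em F (Eu F W h) (emb a))) (Eu F W (M.hd.inv (M.res h x))))
            (Eu F W (M.hd.inv (M.res g (M.act h x)))) := by
          rw [← Em_assoc F (mem_Em F (mem_Eu F W g) mPA cgPA) (mem_Eu F W _) (mem_Eu F W _)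
            (cmp_Em_left F cgPA mPA cPAk) ckm]
      _ = Em F (Em F (Eu F W g) (Em F (Em F (Eu F W h) (emb a)) (Eu F W (M.hd.inv (M.res h x)))))
            (Eu F W (M.hd.inv (M.res g (M.act h x)))) := by
          rw [Em_assoc F (mem_Eu F W g) mPA (mem_Eu F W _) cgPA cPAk]
      _ = Em F (Em F (Eu F W g) (emb (betaOf F W h a))) (Eu F W (M.hd.inv (M.res g (M.act h x)))) := by
          rw [← beta_norm F W h a]
      _ = Em F (Em F (Eu F W g) (emb (C := C) b)) (Eu F W (M.hd.inv (M.res g (M.act h x)))) := by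
          rw [hbe]
      _ = emb (betaOf F W g b) := (beta_norm F W g b).symm
  · -- (A3)
    intro x a
    refine heq_of_em ?_
    have hm : M.gd.src x = M.hd.rng (M.hd.unit (M.gd.src x)) := by rw [M.hd.rng_unit]
    rw [beta_norm F W _ a, M.res_unit_rng x, M.hd.inv_unit,
      Eu_cone F W (M.gd.rng x), Eu_cone F W (M.gd.src x),
      Em_cone_left' F (emb a) (mem_emb_pb a) (M.gd.rng x) rfl,
      Em_cone_right' F (emb a) (mem_emb_pb a) (M.gd.src x) (M.hd.src_unit _).symm]
  · -- (A4)
    intro h x y a b ab hc hxy hab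
    refine heq_of_em ?_
    have hky : M.hd.src (M.res h x) = M.gd.rng y := by rw [M.zs5 h x hc]; exact hxy
    have mA : Mem M (emb a) := mem_emb_pb a
    have mB : Mem M (emb b) := mem_emb_pb b
    have cha : Cmp M (Eu F W h) (emb a) := hc.symm
    have ckb : Cmp M (Eu F W (M.res h x)) (emb b) := hky.symm
    have cAB : Cmp M (emb a) (emb b) := by
      show M.gd.rng y = M.hd.src (M.hd.unit (M.gd.src x))
      rw [M.hd.src_unit]; exact hxy.symm
    have cAk : Cmp M (emb a) (Eu F W (M.hd.inv (M.res h x))) :=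
      cmp_to_Eu F W (by rw [M.hd.rng_inv, M.zs5 h x hc, M.hd.src_unit])
    have cBK : Cmp M (emb b) (Eu F W (M.hd.inv (M.res (M.res h x) y))) :=
      cmp_to_Eu F W (by rw [M.hd.rng_inv, M.zs5 _ y hky, M.hd.src_unit])
    have ckk : Cmp M (Eu F W (M.hd.inv (M.res h x))) (Eu F W (M.res h x)) := by
      show M.gd.rng (M.gd.unit (M.hd.rng (M.res h x))) = M.hd.src (M.hd.inv (M.res h x))
      rw [M.gd.rng_unit, M.hd.src_inv]
    have hemb : Em F (emb a) (emb b) = emb (C := C) ab := by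
      refine em_congr ?_ ?_ hab
      · show M.gd.mul x (M.act (M.hd.unit (M.gd.src x)) y) = M.gd.mul x y
        rw [hxy, M.zs3]
      · show M.hd.mul (M.res (M.hd.unit (M.gd.src x)) y) (M.hd.unit (M.gd.src y))
          = M.hd.unit (M.gd.src (M.gd.mul x y))
        rw [hxy, M.res_unit_rng y, M.hd.unit_mul_unit, M.gd.src_mul x y hxy]
    have mPA : Mem M (Em F (Eu F W h) (emb a)) := mem_Em F (mem_Eu F W h) mA cha
    have cPAk : Cmp M (Em F (Eu F W h) (emb a)) (Eu F W (M.hd.inv (M.res h x))) :=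
      cmp_Em_left F cha mA cAk
    have mP : Mem M (Em F (Em F (Eu F W h) (emb a)) (Eu F W (M.hd.inv (M.res h x)))) :=
      mem_Em F mPA (mem_Eu F W _) cPAk
    have cPk : Cmp M (Em F (Em F (Eu F W h) (emb a)) (Eu F W (M.hd.inv (M.res h x))))
        (Eu F W (M.res h x)) := cmp_Em_left F cPAk (mem_Eu F W _) ckk
    have ckQB : Cmp M (Eu F W (M.res h x))
        (Em F (emb b) (Eu F W (M.hd.inv (M.res (M.res h x) y)))) :=
      cmp_Em_right F ckb mB cBK
    have cPAB : Cmp M (Em F (Eu F W h) (emb a)) (emb b) := cmp_Em_left F cha mA cAB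
    have step3 : Em F (Em F (Em F (Eu F W h) (emb a)) (Eu F W (M.hd.inv (M.res h x))))
        (Eu F W (M.res h x)) = Em F (Eu F W h) (emb a) := by
      calc (Em F (Em F (Em F (Eu F W h) (emb a)) (Eu F W (M.hd.inv (M.res h x)))) (Eu F W (M.res h x)))
          = Em F (Em F (Eu F W h) (emb a))
              (Em F (Eu F W (M.hd.inv (M.res h x))) (Eu F W (M.res h x))) :=
            Em_assoc F mPA (mem_Eu F W _) (mem_Eu F W _) cPAk ckk
        _ = Em F (Em F (Eu F W h) (emb a)) (emb (F.cone (M.hd.src (M.res h x)))) := by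
            rw [Eu_mul F W (h := M.hd.inv (M.res h x)) (k := M.res h x) (by rw [M.hd.src_inv]), M.hd.inv_mul, Eu_cone]
        _ = Em F (Eu F W h) (emb a) := by
            refine Em_cone_right' F _ mPA _ ?_
            show M.hd.src (M.res h x) = M.hd.src (M.hd.mul (M.res h x) (M.hd.unit (M.gd.src x)))
            rw [M.hd.src_mul _ _ (by rw [M.hd.rng_unit]; exact M.zs5 h x hc), M.hd.src_unit]
            exact M.zs5 h x hc
    calc emb (betaOf F W h ab)
        = Em F (Em F (Eu F W h) (emb ab)) (Eu F W (M.hd.inv (M.res h (M.gd.mul x y)))) :=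
          beta_norm F W h ab
      _ = Em F (Em F (Eu F W h) (Em F (emb a) (emb b)))
            (Eu F W (M.hd.inv (M.res (M.res h x) y))) := by
          rw [M.zs4 h x y hc hxy, hemb]
      _ = Em F (Em F (Em F (Eu F W h) (emb a)) (emb b))
            (Eu F W (M.hd.inv (M.res (M.res h x) y))) := by
          rw [Em_assoc F (mem_Eu F W h) mA mB cha cAB]
      _ = Em F (Em F (Eu F W h) (emb a))
            (Em F (emb b) (Eu F W (M.hd.inv (M.res (M.res h x) y)))) :=
          Em_assoc F mPA mB (mem_Eu F W _) cPAB cBK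
      _ = Em F (Em F (Em F (Em F (Eu F W h) (emb a)) (Eu F W (M.hd.inv (M.res h x))))
              (Eu F W (M.res h x)))
            (Em F (emb b) (Eu F W (M.hd.inv (M.res (M.res h x) y)))) := by
          rw [step3]
      _ = Em F (Em F (Em F (Eu F W h) (emb a)) (Eu F W (M.hd.inv (M.res h x))))
            (Em F (Eu F W (M.res h x))
              (Em F (emb b) (Eu F W (M.hd.inv (M.res (M.res h x) y))))) :=
          Em_assoc F mP (mem_Eu F W _) (mem_Em F mB (mem_Eu F W _) cBK) cPk ckQB
      _ = Em F (Em F (Em F (Eu F W h) (emb a)) (Eu F W (M.hd.inv (M.res h x))))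
            (Em F (Em F (Eu F W (M.res h x)) (emb b))
              (Eu F W (M.hd.inv (M.res (M.res h x) y)))) := by
          rw [Em_assoc F (mem_Eu F W _) mB (mem_Eu F W _) ckb cBK]
      _ = emb (F.cmul (betaOf F W h a) (betaOf F W (M.res h x) b)) := by
          rw [← beta_norm F W h a, ← beta_norm F W (M.res h x) b]; rfl
  · -- (A5)
    intro h x a astar hc hstar
    refine heq_of_em ?_
    have mA : Mem M (emb a) := mem_emb_pb a
    have cha : Cmp M (Eu F W h) (emb a) := hc.symm
    have cAk : Cmp M (emb a) (Eu F W (M.hd.inv (M.res h x))) :=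
      cmp_to_Eu F W (by rw [M.hd.rng_inv, M.zs5 h x hc, M.hd.src_unit])
    have mPA : Mem M (Em F (Eu F W h) (emb a)) := mem_Em F (mem_Eu F W h) mA cha
    have cPAk : Cmp M (Em F (Eu F W h) (emb a)) (Eu F W (M.hd.inv (M.res h x))) :=
      cmp_Em_left F cha mA cAk
    have hesa : Es F (emb a) = emb (C := C) astar := by
      refine em_congr ?_ ?_ hstar
      · show M.act (M.hd.inv (M.hd.unit (M.gd.src x))) (M.gd.inv x) = M.gd.inv x
        rw [M.hd.inv_unit,
          show M.gd.src x = M.gd.rng (M.gd.inv x) from (M.gd.rng_inv x).symm, M.zs3]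
      · show M.res (M.hd.inv (M.hd.unit (M.gd.src x))) (M.gd.inv x)
          = M.hd.unit (M.gd.src (M.gd.inv x))
        rw [M.hd.inv_unit,
          show M.gd.src x = M.gd.rng (M.gd.inv x) from (M.gd.rng_inv x).symm, M.res_unit_rng]
    have ckas : Cmp M (Eu F W (M.res h x)) (emb astar) := by
      show M.gd.rng (M.gd.inv x) = M.hd.src (M.res h x)
      rw [M.gd.rng_inv, M.zs5 h x hc]
    have casch : Cmp M (emb astar) (Eu F W (M.hd.inv h)) :=
      cmp_to_Eu F W (by rw [M.hd.rng_inv, M.hd.src_unit, M.gd.src_inv]; exact hc)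
    calc emb (F.cstar (betaOf F W h a))
        = Es F (emb (betaOf F W h a)) := rfl
      _ = Es F (Em F (Em F (Eu F W h) (emb a)) (Eu F W (M.hd.inv (M.res h x)))) := by
          rw [beta_norm F W h a]
      _ = Em F (Es F (Eu F W (M.hd.inv (M.res h x)))) (Es F (Em F (Eu F W h) (emb a))) :=
          Es_Em F mPA (mem_Eu F W _) cPAk
      _ = Em F (Eu F W (M.res h x)) (Em F (Es F (emb a)) (Es F (Eu F W h))) := by
          rw [Es_Eu, M.hd.inv_inv, Es_Em F (mem_Eu F W h) mA cha]
      _ = Em F (Eu F W (M.res h x)) (Em F (emb (C := C) astar) (Eu F W (M.hd.inv h))) := by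
          rw [hesa, Es_Eu]
      _ = Em F (Em F (Eu F W (M.res h x)) (emb (C := C) astar)) (Eu F W (M.hd.inv h)) :=
          (Em_assoc F (mem_Eu F W _) (mem_emb_pb astar) (mem_Eu F W _) ckas casch).symm
      _ = emb (betaOf F W (M.res h x) astar) := by
          rw [beta_norm F W (M.res h x) astar, M.res_res_inv hc]
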